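/- arXiv:1910.07032 — 4 statements merged into one kernel-verified Lean document; each statement's English description precedes it below -/
import Mathlib

section
/- Let f \in k[x^{-1},x,y] be nonzero, (p,q) \in N^2 coprime, and suppose there is no one-dimensional face of the Newton polygon of f whose supporting line has equation pa + qb = N for any N. Let m(p,q) be the minimum of ap+bq over the Newton diagram \Delta(f). Then for any \mu \in k^* and (p',q') with pp'-qq'=1, the Newton transform f_1(x_1,y_1) = f(\mu^{q'} x_1^p, x_1^q(y_1+\mu^{p'})) equals x_1^{m(p,q)} u(x_1,y_1) for some polynomial u \in k[x_1,y_1] with u(0,0) \neq 0. -/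
/-- Evaluation of a Laurent polynomial `f ∈ k[x⁻¹, x, y]` (Laurent in `x`, polynomial in
`y`), represented by its finitely supported coefficient function, at `(x, y) ∈ kˣ × k`. -/
def Lval {k : Type*} [Field k] (f : (ℤ × ℕ) →₀ k) (x : kˣ) (y : k) : k :=
  f.sum fun ab c => c * ((x ^ ab.1 : kˣ) : k) * y ^ ab.2

/-- Newton lemma, vertex case: if the linear form `ap + bq` has a unique minimizer `N` on
the support of `f` (no one-dimensional face with supporting line `pa + qb = N`), then for
any `μ ∈ k*` the Newton transform `f₁(x₁,y₁) = f(μ^{q'} x₁^p, x₁^q(y₁ + μ^{p'}))` equals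
`x₁^{m(p,q)} u(x₁,y₁)` with `u` a polynomial and `u(0,0) ≠ 0`. -/
theorem stmt_4 {k : Type*} [Field k] [CharZero k] [IsAlgClosed k]
    (f : (ℤ × ℕ) →₀ k) (hf : f ≠ 0) (p q : ℕ) (hpq : Nat.gcd p q = 1)
    (N : ℤ) (hmin : ∀ ab ∈ f.support, N ≤ (p : ℤ) * ab.1 + (q : ℤ) * ab.2)
    (hatt : ∃ ab ∈ f.support, (p : ℤ) * ab.1 + (q : ℤ) * ab.2 = N)
    (huniq : ∀ ab ∈ f.support, ∀ ab' ∈ f.support,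
      (p : ℤ) * ab.1 + (q : ℤ) * ab.2 = N → (p : ℤ) * ab'.1 + (q : ℤ) * ab'.2 = N →
      ab = ab')
    (μ : kˣ) (p' q' : ℤ) (hdet : (p : ℤ) * p' - (q : ℤ) * q' = 1) :
    ∃ u : MvPolynomial (Fin 2) k,
      MvPolynomial.eval ![(0 : k), 0] u ≠ 0 ∧
      ∀ (x₁ : kˣ) (y₁ : k),
        Lval f (μ ^ q' * x₁ ^ p) (((x₁ : k)) ^ q * (y₁ + ((μ ^ p' : kˣ) : k))) =
          ((x₁ ^ N : kˣ) : k) * MvPolynomial.eval ![(x₁ : k), y₁] u := by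
  obtain ⟨ab₀, hab₀, hN₀⟩ := hatt
  refine ⟨f.support.sum (fun ab => MvPolynomial.C ((f ab) * ((μ ^ (q' * ab.1) : kˣ) : k)) *
      (MvPolynomial.X 0) ^ (((p : ℤ) * ab.1 + (q : ℤ) * ab.2 - N).toNat) *
      (MvPolynomial.X 1 + MvPolynomial.C ((μ ^ p' : kˣ) : k)) ^ ab.2), ?_, ?_⟩
  · rw [map_sum, Finset.sum_eq_single ab₀]
    · have : ((p : ℤ) * ab₀.1 + (q : ℤ) * ab₀.2 - N).toNat = 0 := by omega
      simp [this]
      exact ⟨⟨Finsupp.mem_support_iff.mp hab₀, zpow_ne_zero _ μ.ne_zero⟩,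
        fun h => absurd h (zpow_ne_zero _ μ.ne_zero)⟩
    · intro ab hab hne
      have h1 : N ≤ (p : ℤ) * ab.1 + (q : ℤ) * ab.2 := hmin ab hab
      have h2 : (p : ℤ) * ab.1 + (q : ℤ) * ab.2 ≠ N := fun h =>
        hne (huniq ab hab ab₀ hab₀ h hN₀)
      have : ((p : ℤ) * ab.1 + (q : ℤ) * ab.2 - N).toNat ≠ 0 := by omega
      simp [zero_pow this]
    · intro h; exact absurd hab₀ h
  · intro x₁ y₁
    rw [Lval, Finsupp.sum, map_sum, Finset.mul_sum]
    refine Finset.sum_congr rfl fun ab hab => ?_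
    have hx : (x₁ : k) ≠ 0 := x₁.ne_zero
    have hμ : (μ : k) ≠ 0 := μ.ne_zero
    have he : (((p : ℤ) * ab.1 + (q : ℤ) * ab.2 - N).toNat : ℤ)
        = (p : ℤ) * ab.1 + (q : ℤ) * ab.2 - N := Int.toNat_of_nonneg (by
          have := hmin ab hab; omega)
    simp only [map_mul, map_pow, map_add, MvPolynomial.eval_C, MvPolynomial.eval_X,
      Matrix.cons_val_zero, Matrix.cons_val_one, Matrix.head_cons,
      Units.val_zpow_eq_zpow_val, Units.val_mul, Units.val_pow_eq_pow_val]
    rw [mul_zpow, ← zpow_natCast (x₁ : k) p, ← zpow_mul, ← zpow_mul,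
      ← zpow_natCast (x₁ : k) (((p : ℤ) * ab.1 + (q : ℤ) * ab.2 - N).toNat), he,
      mul_pow, ← pow_mul, ← zpow_natCast (x₁ : k) (q * ab.2)]
    rw [show (↑(q * ab.2) : ℤ) = (q : ℤ) * ab.2 by push_cast; ring]
    rw [show (p : ℤ) * ab.1 = (p : ℤ) * ab.1 from rfl]
    have key : (x₁ : k) ^ (N : ℤ) * (x₁ : k) ^ ((p : ℤ) * ab.1 + (q : ℤ) * ab.2 - N)
        = (x₁ : k) ^ ((p : ℤ) * ab.1) * (x₁ : k) ^ ((q : ℤ) * ab.2) := by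
      rw [← zpow_add₀ hx, ← zpow_add₀ hx]; ring_nf
    rw [mul_comm (f ab * ↑μ ^ (q' * ab.1) * (x₁:k) ^ ((p:ℤ) * ab.1 + (q:ℤ) * ab.2 - N))
      ((y₁ + (μ:k) ^ p') ^ ab.2)] at *
    calc f ab * ((μ:k) ^ (q' * ab.1) * (x₁:k) ^ ((p:ℤ) * ab.1)) *
        ((x₁:k) ^ ((q:ℤ) * ab.2) * (y₁ + (μ:k) ^ p') ^ ab.2)
        = ((x₁:k) ^ ((p:ℤ) * ab.1) * (x₁:k) ^ ((q:ℤ) * ab.2)) *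
          (f ab * (μ:k) ^ (q' * ab.1) * (y₁ + (μ:k) ^ p') ^ ab.2) := by ring
      _ = ((x₁:k) ^ N * (x₁:k) ^ ((p:ℤ) * ab.1 + (q:ℤ) * ab.2 - N)) *
          (f ab * (μ:k) ^ (q' * ab.1) * (y₁ + (μ:k) ^ p') ^ ab.2) := by rw [key]
      _ = _ := by ring
end

section
/- Any finite composition \Sigma of Newton transformations (in the Newton algorithm at infinity) applied to k[x,y] has the form P(x,y) \mapsto P(a v^A, b v^B w + Q(v)) or P(x,y) \mapsto P(b v^B w + Q(v), a v^A), where A, B \in Z, a, b \in k, and Q \in k[v, v^{-1}] is a Laurent polynomial. -/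
/-- The substitution maps `kˣ × k → k × k` underlying the Newton transformations at
infinity of Definition 2.11 (together with the identity, allowing purely local
compositions): `f(x,y) ↦ f(μ^{q'} v^{-p}, v^{-q}(w + μ^{p'}))` for `p > 0, q > 0`
(with `qq' - pp' = 1`) or `p > 0, q < 0` (with `pp' - qq' = 1`),
`f(x,y) ↦ f(v^{-p}(w + μ^{q'}), μ^{p'} v^{-q})` for `p < 0, q > 0`,
`f(x,y) ↦ f(w + μ, v⁻¹)` and `f(x,y) ↦ f(v⁻¹, w + μ)`. -/
inductive IsInftyNewtonSub (k : Type*) [Field k] : (kˣ × k → k × k) → Prop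
  | inf_inf (p q : ℕ) (hp : 0 < p) (hq : 0 < q) (hpq : Nat.gcd p q = 1)
      (p' q' : ℤ) (h : (q : ℤ) * q' - (p : ℤ) * p' = 1) (μ : kˣ) :
      IsInftyNewtonSub k (fun vw =>
        (((μ ^ q' * vw.1 ^ (-(p : ℤ)) : kˣ) : k),
          ((vw.1 ^ (-(q : ℤ)) : kˣ) : k) * (vw.2 + ((μ ^ p' : kˣ) : k))))
  | inf_zero (p : ℕ) (q : ℤ) (hp : 0 < p) (hq : q < 0) (hpq : Int.gcd (p : ℤ) q = 1)
      (p' q' : ℤ) (h : (p : ℤ) * p' - q * q' = 1) (μ : kˣ) :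
      IsInftyNewtonSub k (fun vw =>
        (((μ ^ q' * vw.1 ^ (-(p : ℤ)) : kˣ) : k),
          ((vw.1 ^ (-q) : kˣ) : k) * (vw.2 + ((μ ^ p' : kˣ) : k))))
  | zero_inf (p : ℤ) (q : ℕ) (hp : p < 0) (hq : 0 < q) (hpq : Int.gcd p (q : ℤ) = 1)
      (p' q' : ℤ) (h : p * p' - (q : ℤ) * q' = 1) (μ : kˣ) :
      IsInftyNewtonSub k (fun vw =>
        (((vw.1 ^ (-p) : kˣ) : k) * (vw.2 + ((μ ^ q' : kˣ) : k)),
          ((μ ^ p' * vw.1 ^ (-(q : ℤ)) : kˣ) : k)))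
  | horizontal (μ : k) :
      IsInftyNewtonSub k (fun vw => (vw.2 + μ, ((vw.1⁻¹ : kˣ) : k)))
  | vertical (μ : k) :
      IsInftyNewtonSub k (fun vw => (((vw.1⁻¹ : kˣ) : k), vw.2 + μ))
  | id_sub :
      IsInftyNewtonSub k (fun vw => ((vw.1 : k), vw.2))

/-- The substitution map `kˣ × k → kˣ × k` of a local Newton transformation
`σ_{(p,q,μ)} : f(x,y) ↦ f(μ^{q'} x₁^p, x₁^q (y₁ + μ^{p'}))`. -/
def localNewtonSub {k : Type*} [Field k] (p q : ℕ) (p' q' : ℤ) (μ : kˣ) :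
    kˣ × k → kˣ × k :=
  fun vw => (μ ^ q' * vw.1 ^ p, ((vw.1 ^ (q : ℤ) : kˣ) : k) * (vw.2 + ((μ ^ p' : kˣ) : k)))

/-- The substitution maps arising as compositions of Newton transformations in a Newton
algorithm (at infinity): a Newton transformation at infinity (or the identity) followed
by finitely many local Newton transformations. -/
inductive IsNewtonComposition (k : Type*) [Field k] : (kˣ × k → k × k) → Prop
  | base (S : kˣ × k → k × k) (h : IsInftyNewtonSub k S) : IsNewtonComposition k S
  | comp (S : kˣ × k → k × k) (h : IsNewtonComposition k S) (p q : ℕ)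
      (hpq : Nat.gcd p q = 1) (p' q' : ℤ) (hd : (p : ℤ) * p' - (q : ℤ) * q' = 1)
      (μ : kˣ) : IsNewtonComposition k (S ∘ localNewtonSub p q p' q' μ)

section AuxEvalL
variable {k : Type*} [Field k]

noncomputable def evalL (Q : ℤ →₀ k) (v : kˣ) : k := Q.sum fun i c => c * ((v ^ i : kˣ) : k)

lemma evalL_def (Q : ℤ →₀ k) (v : kˣ) :
    (Q.sum fun i c => c * ((v ^ i : kˣ) : k)) = evalL Q v := rfl

lemma evalL_add (Q1 Q2 : ℤ →₀ k) (v : kˣ) : evalL (Q1 + Q2) v = evalL Q1 v + evalL Q2 v :=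
  Finsupp.sum_add_index' (fun _ => zero_mul _) (fun _ _ _ => add_mul _ _ _)

lemma evalL_single (n : ℤ) (c : k) (v : kˣ) :
    evalL (Finsupp.single n c) v = c * ((v ^ n : kˣ) : k) :=
  Finsupp.sum_single_index (h := fun i c => c * ((v ^ i : kˣ) : k)) (zero_mul _)

lemma evalL_zero (v : kˣ) : evalL (0 : ℤ →₀ k) v = 0 := Finsupp.sum_zero_index

lemma evalL_comp (Q : ℤ →₀ k) (u v : kˣ) (p : ℤ) :
    evalL (Q.sum fun i c => Finsupp.single (p * i) (c * ((u ^ i : kˣ) : k))) v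
      = evalL Q (u * v ^ p) := by
  rw [evalL, Finsupp.sum_sum_index (h := fun i c => c * ((v ^ i : kˣ) : k))
    (fun _ => zero_mul _) (fun _ _ _ => add_mul _ _ _)]
  refine Finsupp.sum_congr fun i _ => ?_
  rw [Finsupp.sum_single_index (h := fun i c => c * ((v ^ i : kˣ) : k)) (zero_mul _)]
  rw [mul_zpow, ← zpow_mul]
  push_cast [Units.val_mul]
  ring

lemma unit_pow_helper {k : Type*} [Field k] (μ v : kˣ) (q' : ℤ) (p : ℕ) (A : ℤ) :
    (((μ ^ q' * v ^ p) ^ A : kˣ) : k)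
      = ((μ ^ (q' * A) : kˣ) : k) * ((v ^ ((p : ℤ) * A) : kˣ) : k) := by
  rw [zpow_mul, zpow_mul, zpow_natCast, mul_zpow, Units.val_mul]

end AuxEvalL

/-- Any finite composition `Σ` of Newton transformations in the Newton algorithm at
infinity has the form `P(x,y) ↦ P(a v^A, b v^B w + Q(v))` or
`P(x,y) ↦ P(b v^B w + Q(v), a v^A)` with `A, B ∈ ℤ`, `a, b ∈ k` and `Q ∈ k[v, v⁻¹]`. -/


theorem stmt_5 {k : Type*} [Field k] (S : kˣ × k → k × k)
    (hS : IsNewtonComposition k S) :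
    ∃ (A B : ℤ) (a b : k) (Q : ℤ →₀ k),
      (∀ (v : kˣ) (w : k),
        S (v, w) = (a * ((v ^ A : kˣ) : k),
          b * ((v ^ B : kˣ) : k) * w + Q.sum fun i c => c * ((v ^ i : kˣ) : k))) ∨
      (∀ (v : kˣ) (w : k),
        S (v, w) = (b * ((v ^ B : kˣ) : k) * w + Q.sum (fun i c => c * ((v ^ i : kˣ) : k)),
          a * ((v ^ A : kˣ) : k))) := by

  induction hS with
  | base S h =>
    cases h with
    | inf_inf p q hp hq hpq p' q' h μ =>
      refine ⟨-(p : ℤ), -(q : ℤ), ((μ ^ q' : kˣ) : k), 1,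
        Finsupp.single (-(q : ℤ)) ((μ ^ p' : kˣ) : k), Or.inl fun v w => ?_⟩
      rw [evalL_def, evalL_single, Prod.mk.injEq]
      constructor
      · rw [Units.val_mul]
      · ring
    | inf_zero p q hp hq hpq p' q' h μ =>
      refine ⟨-(p : ℤ), -q, ((μ ^ q' : kˣ) : k), 1,
        Finsupp.single (-q) ((μ ^ p' : kˣ) : k), Or.inl fun v w => ?_⟩
      rw [evalL_def, evalL_single, Prod.mk.injEq]
      constructor
      · rw [Units.val_mul]
      · ring
    | zero_inf p q hp hq hpq p' q' h μ =>
      refine ⟨-(q : ℤ), -p, ((μ ^ p' : kˣ) : k), 1,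
        Finsupp.single (-p) ((μ ^ q' : kˣ) : k), Or.inr fun v w => ?_⟩
      rw [evalL_def, evalL_single, Prod.mk.injEq]
      constructor
      · ring
      · rw [Units.val_mul]
    | horizontal μ =>
      refine ⟨-1, 0, 1, 1, Finsupp.single 0 μ, Or.inr fun v w => ?_⟩
      rw [evalL_def, evalL_single, Prod.mk.injEq]
      constructor
      · simp
      · simp
    | vertical μ =>
      refine ⟨-1, 0, 1, 1, Finsupp.single 0 μ, Or.inl fun v w => ?_⟩
      rw [evalL_def, evalL_single, Prod.mk.injEq]
      constructor
      · simp
      · simp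
    | id_sub =>
      refine ⟨1, 0, 1, 1, 0, Or.inl fun v w => ?_⟩
      rw [evalL_def, evalL_zero, Prod.mk.injEq]
      constructor
      · simp
      · simp
  | comp S hN p q hpq p' q' hd μ ih =>
    obtain ⟨A, B, a, b, Q, hc⟩ := ih
    set u : kˣ := μ ^ q' with hu
    rcases hc with hS' | hS'
    · refine ⟨(p : ℤ) * A, (p : ℤ) * B + q, a * ((μ ^ (q' * A) : kˣ) : k),
        b * ((μ ^ (q' * B) : kˣ) : k),
        (Q.sum fun i c => Finsupp.single ((p : ℤ) * i) (c * ((u ^ i : kˣ) : k)))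
          + Finsupp.single ((p : ℤ) * B + q) (b * ((μ ^ (q' * B + p') : kˣ) : k)),
        Or.inl fun v w => ?_⟩
      have key := hS' (μ ^ q' * v ^ p) (((v ^ (q : ℤ) : kˣ) : k) * (w + ((μ ^ p' : kˣ) : k)))
      simp only [Function.comp_apply, localNewtonSub]
      rw [key, evalL_def, evalL_def, evalL_add, evalL_single, evalL_comp,
        show ((v : kˣ) ^ ((p : ℤ))) = v ^ p from zpow_natCast v p,
        Prod.mk.injEq]
      constructor
      · rw [unit_pow_helper]; ring
      · rw [unit_pow_helper, zpow_add μ, zpow_add v, Units.val_mul, Units.val_mul]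
        ring
    · refine ⟨(p : ℤ) * A, (p : ℤ) * B + q, a * ((μ ^ (q' * A) : kˣ) : k),
        b * ((μ ^ (q' * B) : kˣ) : k),
        (Q.sum fun i c => Finsupp.single ((p : ℤ) * i) (c * ((u ^ i : kˣ) : k)))
          + Finsupp.single ((p : ℤ) * B + q) (b * ((μ ^ (q' * B + p') : kˣ) : k)),
        Or.inr fun v w => ?_⟩
      have key := hS' (μ ^ q' * v ^ p) (((v ^ (q : ℤ) : kˣ) : k) * (w + ((μ ^ p' : kˣ) : k)))
      simp only [Function.comp_apply, localNewtonSub]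
      rw [key, evalL_def, evalL_def, evalL_add, evalL_single, evalL_comp,
        show ((v : kˣ) ^ ((p : ℤ))) = v ^ p from zpow_natCast v p,
        Prod.mk.injEq]
      constructor
      · rw [unit_pow_helper, zpow_add μ, zpow_add v, Units.val_mul, Units.val_mul]
        ring
      · rw [unit_pow_helper]; ring
end

section
/- Let f \in C[x,y] have only isolated critical points in C^2 (equivalently, the critical locus of f is finite). Let A, B be nonzero integers and P \in C[x_1, x_1^{-1}] a Laurent polynomial, and define g(x_1,y_1) = f(x_1^A, x_1^B y_1 + P(x_1)) on C^* \times C. Then g has only isolated critical points in C^* \times C. -/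
open MvPolynomial

lemma hasDerivAt_mveval (f : MvPolynomial (Fin 2) ℂ) {u v : ℂ → ℂ} {u' v' t : ℂ}
    (hu : HasDerivAt u u' t) (hv : HasDerivAt v v' t) :
    HasDerivAt (fun s => eval ![u s, v s] f)
      (eval ![u t, v t] (pderiv 0 f) * u' + eval ![u t, v t] (pderiv 1 f) * v') t := by
  induction f using MvPolynomial.induction_on with
  | C a => simpa using hasDerivAt_const t a
  | add p q hp hq =>
      have := hp.fun_add hq
      simp only [eval_add, map_add] at this ⊢
      refine this.congr_deriv ?_
      ring
  | mul_X p n hp =>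
      have hxn : HasDerivAt (fun s => (![u s, v s] : Fin 2 → ℂ) n)
          (eval ![u t, v t] (pderiv 0 (X n)) * u' + eval ![u t, v t] (pderiv 1 (X n)) * v') t := by
        fin_cases n <;>
          simp [pderiv_X_self, pderiv_X_of_ne, (by decide : (0:Fin 2) ≠ 1), (by decide : (1:Fin 2) ≠ 0)] <;>
          [exact hu; exact hv]
      have := hp.fun_mul hxn
      simp only [eval_mul, map_mul, eval_X] at this ⊢
      refine this.congr_deriv ?_
      simp [pderiv_mul]
      fin_cases n <;>
        simp [pderiv_X_self, pderiv_X_of_ne, (by decide : (0:Fin 2) ≠ 1), (by decide : (1:Fin 2) ≠ 0)] <;>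
        ring

lemma zpow_eq_finite (A : ℤ) (hA : A ≠ 0) (c : ℂ) : {x : ℂ | x ≠ 0 ∧ x ^ A = c}.Finite := by
  set n := A.natAbs with hn
  have hn0 : 0 < n := Int.natAbs_pos.mpr hA
  rcases Int.natAbs_eq A with h | h
  · apply (Polynomial.finite_setOf_isRoot (Polynomial.X_pow_sub_C_ne_zero hn0 c)).subset
    rintro x ⟨hx0, hx⟩
    simp only [Set.mem_setOf_eq, Polynomial.IsRoot, Polynomial.eval_sub, Polynomial.eval_pow,
      Polynomial.eval_X, Polynomial.eval_C, sub_eq_zero]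
    rw [h, zpow_natCast] at hx
    exact hx
  · apply (Polynomial.finite_setOf_isRoot (Polynomial.X_pow_sub_C_ne_zero hn0 c⁻¹)).subset
    rintro x ⟨hx0, hx⟩
    simp only [Set.mem_setOf_eq, Polynomial.IsRoot, Polynomial.eval_sub, Polynomial.eval_pow,
      Polynomial.eval_X, Polynomial.eval_C, sub_eq_zero]
    rw [h, zpow_neg, zpow_natCast] at hx
    rw [← hx, inv_inv]

/-- If `f ∈ ℂ[x,y]` has only isolated (equivalently, finitely many) critical points in
`ℂ²`, then for nonzero integers `A, B` and a Laurent polynomial `P ∈ ℂ[x₁, x₁⁻¹]`, the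
function `g(x₁,y₁) = f(x₁^A, x₁^B y₁ + P(x₁))` has only isolated critical points in
`ℂ* × ℂ`: its critical set has no accumulation point with first coordinate nonzero. -/
theorem stmt_6 (f : MvPolynomial (Fin 2) ℂ)
    (hf : {z : Fin 2 → ℂ | ∀ i, MvPolynomial.eval z (MvPolynomial.pderiv i f) = 0}.Finite)
    (A B : ℤ) (hA : A ≠ 0) (hB : B ≠ 0) (P : ℤ →₀ ℂ)
    (g : ℂ → ℂ → ℂ)
    (hg : ∀ x y : ℂ, g x y =
      MvPolynomial.eval ![x ^ A, x ^ B * y + P.sum fun i c => c * x ^ i] f) :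
    ∀ p : ℂ × ℂ, p.1 ≠ 0 →
      ¬ AccPt p (Filter.principal
        {w : ℂ × ℂ | w.1 ≠ 0 ∧ deriv (fun t => g t w.2) w.1 = 0 ∧ deriv (g w.1) w.2 = 0}) := by
  set Q : ℂ → ℂ := fun x => P.sum fun i c => c * x ^ i with hQ
  set S : Set (ℂ × ℂ) :=
    {w : ℂ × ℂ | w.1 ≠ 0 ∧ deriv (fun t => g t w.2) w.1 = 0 ∧ deriv (g w.1) w.2 = 0} with hS
  -- derivative of Q at nonzero points
  have hQder : ∀ x : ℂ, x ≠ 0 → HasDerivAt Q (P.sum fun i c => c * (i * x ^ (i - 1))) x := by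
    intro x hx
    rw [hQ]
    simp only [Finsupp.sum]
    apply HasDerivAt.fun_sum
    intro i _
    exact (hasDerivAt_zpow i x (Or.inl hx)).const_mul (P i)
  -- critical points of g map to critical points of f
  have key : ∀ w : ℂ × ℂ, w ∈ S →
      (∀ i, MvPolynomial.eval ![w.1 ^ A, w.1 ^ B * w.2 + Q w.1] (MvPolynomial.pderiv i f) = 0) := by
    rintro ⟨x, y⟩ ⟨hx, hd1, hd2⟩
    dsimp only at hx hd1 hd2 ⊢
    set Φ : Fin 2 → ℂ := ![x ^ A, x ^ B * y + Q x] with hΦ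
    -- derivative in y
    have h2 : HasDerivAt (g x)
        (MvPolynomial.eval Φ (MvPolynomial.pderiv 0 f) * 0 +
          MvPolynomial.eval Φ (MvPolynomial.pderiv 1 f) * (x ^ B)) y := by
      have hv : HasDerivAt (fun s => x ^ B * s + Q x) (x ^ B) y := by
        simpa using ((hasDerivAt_id y).const_mul (x ^ B)).add_const (Q x)
      have := hasDerivAt_mveval f (u := fun _ => x ^ A) (v := fun s => x ^ B * s + Q x)
        (u' := 0) (v' := x ^ B) (t := y) (hasDerivAt_const y (x ^ A)) hv
      have hfun : g x = fun s => MvPolynomial.eval ![x ^ A, x ^ B * s + Q x] f :=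
        funext fun s => hg x s
      rw [hΦ, hfun]
      exact this
    have h2' : MvPolynomial.eval Φ (MvPolynomial.pderiv 1 f) = 0 := by
      have := h2.deriv
      rw [hd2] at this
      have hxB : (x : ℂ) ^ B ≠ 0 := zpow_ne_zero B hx
      field_simp at this
      simpa [hx, hB, hxB] using this
    -- derivative in x
    have h1 : HasDerivAt (fun t => g t y)
        (MvPolynomial.eval Φ (MvPolynomial.pderiv 0 f) * ((A : ℂ) * x ^ (A - 1)) +
          MvPolynomial.eval Φ (MvPolynomial.pderiv 1 f) *
            ((B : ℂ) * x ^ (B - 1) * y + P.sum fun i c => c * (i * x ^ (i - 1)))) x := by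
      have := hasDerivAt_mveval f (u := fun t => t ^ A) (v := fun t => t ^ B * y + Q t)
        (u' := (A : ℂ) * x ^ (A - 1))
        (v' := (B : ℂ) * x ^ (B - 1) * y + P.sum fun i c => c * (i * x ^ (i - 1))) (t := x)
        (hasDerivAt_zpow A x (Or.inl hx))
        (((hasDerivAt_zpow B x (Or.inl hx)).mul_const y).add (hQder x hx))
      have hfun : (fun t => g t y) = fun t => MvPolynomial.eval ![t ^ A, t ^ B * y + Q t] f :=
        funext fun t => hg t y
      rw [hΦ, hfun]
      simpa using this
    have h1' : MvPolynomial.eval Φ (MvPolynomial.pderiv 0 f) = 0 := by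
      have := h1.deriv
      rw [hd1, h2', zero_mul, add_zero] at this
      have hAx : (A : ℂ) * x ^ (A - 1) ≠ 0 :=
        mul_ne_zero (Int.cast_ne_zero.mpr hA) (zpow_ne_zero _ hx)
      exact (mul_eq_zero.mp this.symm).resolve_right hAx
    intro i
    fin_cases i
    · exact h1'
    · exact h2'
  -- S is finite
  have hSfin : S.Finite := by
    have hsub : S ⊆ ⋃ z ∈ {z : Fin 2 → ℂ | ∀ i,
        MvPolynomial.eval z (MvPolynomial.pderiv i f) = 0},
        {w : ℂ × ℂ | w.1 ≠ 0 ∧ (![w.1 ^ A, w.1 ^ B * w.2 + Q w.1] : Fin 2 → ℂ) = z} := by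
      intro w hw
      refine Set.mem_biUnion (key w hw) ⟨hw.1, rfl⟩
    refine (Set.Finite.biUnion hf fun z _ => ?_).subset hsub
    have himg : {w : ℂ × ℂ | w.1 ≠ 0 ∧ (![w.1 ^ A, w.1 ^ B * w.2 + Q w.1] : Fin 2 → ℂ) = z} ⊆
        (fun x => (x, (z 1 - Q x) / x ^ B)) '' {x : ℂ | x ≠ 0 ∧ x ^ A = z 0} := by
      rintro ⟨x, y⟩ ⟨hx, hz⟩
      have h0 : x ^ A = z 0 := by simpa using congrFun hz 0
      have h1 : x ^ B * y + Q x = z 1 := by simpa using congrFun hz 1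
      refine ⟨x, ⟨hx, h0⟩, ?_⟩
      have hxB : (x : ℂ) ^ B ≠ 0 := zpow_ne_zero B hx
      have : y = (z 1 - Q x) / x ^ B := by
        field_simp
        linear_combination h1
      simp [← this]
    exact ((zpow_eq_finite A hA (z 0)).image _).subset himg
  -- finite sets have no accumulation points
  intro p _ hacc
  rw [accPt_principal_iff_clusterPt] at hacc
  have hclosed : IsClosed (S \ {p}) := (hSfin.subset Set.diff_subset).isClosed
  have : p ∈ S \ {p} := by
    rw [← hclosed.closure_eq]
    exact mem_closure_iff_clusterPt.mpr hacc
  exact this.2 rfl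
end

section
/- Let f(x,y) = x^a y^b \prod_{i=1}^r (x^q - \mu_i y^p)^{\nu_i} with (p,q) a primitive vector in (N^*)^2, \mu_i \in C^* pairwise distinct, a \in Z, b \in N, r \geq 1, \nu_i \geq 1. Then \chi_c(f^{-1}(1) \cap (C^*)^2) = -\frac{2 r S}{\sum_{i=1}^r \nu_i}, where S is the area of the triangle with vertices (0,0), (a + q\sum \nu_i, b), (a, b + p\sum \nu_i). -/
open Polynomial in
lemma aux_card_pow (n : ℕ) (hn : n ≠ 0) (d : ℂ) (hd : d ≠ 0) :
    {y : ℂ | y ^ n = d}.Finite ∧ {y : ℂ | y ^ n = d}.ncard = n := by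
  have hn' : 0 < n := Nat.pos_of_ne_zero hn
  have hprim := Complex.isPrimitiveRoot_exp n hn
  have hset : {y : ℂ | y ^ n = d} = ↑(nthRoots n d).toFinset := by
    ext y
    simp [mem_nthRoots hn', Multiset.mem_toFinset]
  constructor
  · rw [hset]; exact (nthRoots n d).toFinset.finite_toSet
  · rw [hset, Set.ncard_coe_finset, Multiset.toFinset_card_of_nodup (hprim.nthRoots_nodup hd),
      hprim.card_nthRoots d, if_pos (IsAlgClosed.exists_pow_nat_eq d hn')]

lemma aux_card_zpow (N : ℤ) (hN : N ≠ 0) (d : ℂ) (hd : d ≠ 0) :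
    {y : ℂ | y ≠ 0 ∧ y ^ N = d}.Finite ∧ {y : ℂ | y ≠ 0 ∧ y ^ N = d}.ncard = N.natAbs := by
  have hna : N.natAbs ≠ 0 := by omega
  rcases lt_or_gt_of_ne hN with hneg | hpos
  · have hset : {y : ℂ | y ≠ 0 ∧ y ^ N = d} = {y : ℂ | y ^ N.natAbs = d⁻¹} := by
      ext y
      simp only [Set.mem_setOf_eq]
      constructor
      · rintro ⟨hy, hyd⟩
        have h2 : y ^ (N.natAbs : ℤ) = d⁻¹ := by
          rw [show (N.natAbs : ℤ) = -N by omega, zpow_neg, hyd]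
        rwa [zpow_natCast] at h2
      · intro hyd
        have hy : y ≠ 0 := by
          intro h; rw [h, zero_pow hna] at hyd; exact hd (by rw [← inv_inv d, ← hyd, inv_zero])
        refine ⟨hy, ?_⟩
        have h2 : y ^ (N.natAbs : ℤ) = d⁻¹ := by rw [zpow_natCast]; exact hyd
        rw [show (N.natAbs : ℤ) = -N by omega, zpow_neg] at h2
        have h3 := congrArg Inv.inv h2
        simpa using h3
    rw [hset]; exact aux_card_pow _ hna _ (inv_ne_zero hd)
  · have hset : {y : ℂ | y ≠ 0 ∧ y ^ N = d} = {y : ℂ | y ^ N.natAbs = d} := by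
      ext y
      simp only [Set.mem_setOf_eq]
      constructor
      · rintro ⟨hy, hyd⟩
        have h2 : y ^ (N.natAbs : ℤ) = d := by
          rw [show (N.natAbs : ℤ) = N by omega]; exact hyd
        rwa [zpow_natCast] at h2
      · intro hyd
        have hy : y ≠ 0 := by
          intro h; rw [h, zero_pow hna] at hyd; exact hd hyd.symm
        refine ⟨hy, ?_⟩
        rw [show N = (N.natAbs : ℤ) by omega, zpow_natCast]; exact hyd
    rw [hset]; exact aux_card_pow _ hna _ hd

lemma aux_comb (x y : ℂ) (hx : x ≠ 0) (hy : y ≠ 0) (u v u' v' s t : ℤ) :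
    (x ^ u * y ^ v) ^ s * (x ^ u' * y ^ v') ^ t = x ^ (u * s + u' * t) * y ^ (v * s + v' * t) := by
  rw [mul_zpow, mul_zpow, ← zpow_mul, ← zpow_mul, ← zpow_mul, ← zpow_mul,
    zpow_add₀ hx, zpow_add₀ hy]
  ring

lemma aux_key (p q : ℕ) (β δ : ℤ) (hbez : (p:ℤ) * δ - (q:ℤ) * β = 1)
    (r : ℕ) (μ : Fin r → ℂ) (ν : Fin r → ℕ) (a : ℤ) (b : ℕ)
    (X Y : ℂ) (hX : X ≠ 0) (hY : Y ≠ 0) :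
    (X ^ (p:ℤ) * Y ^ β) ^ a * (X ^ (q:ℤ) * Y ^ δ) ^ b *
      ∏ i, ((X ^ (p:ℤ) * Y ^ β) ^ q - μ i * (X ^ (q:ℤ) * Y ^ δ) ^ p) ^ ν i
    = X ^ ((p:ℤ) * a + (q:ℤ) * (b:ℤ) + (p:ℤ) * (q:ℤ) * (∑ i, (ν i : ℤ)))
      * Y ^ (β * a + δ * (b:ℤ) + β * (q:ℤ) * (∑ i, (ν i : ℤ)))
      * ∏ i, (1 - μ i * Y) ^ ν i := by
  have hfac : ∀ i : Fin r, (X ^ (p:ℤ) * Y ^ β) ^ q - μ i * (X ^ (q:ℤ) * Y ^ δ) ^ p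
      = X ^ ((p:ℤ) * q) * Y ^ (β * q) * (1 - μ i * Y) := by
    intro i
    rw [← zpow_natCast (X ^ (p:ℤ) * Y ^ β) q, ← zpow_natCast (X ^ (q:ℤ) * Y ^ δ) p,
      mul_zpow, mul_zpow, ← zpow_mul, ← zpow_mul, ← zpow_mul, ← zpow_mul]
    have h1 : Y ^ (δ * (p:ℤ)) = Y ^ (β * (q:ℤ)) * Y := by
      rw [← zpow_add_one₀ hY]; congr 1; linarith
    have h2 : X ^ ((q:ℤ) * (p:ℤ)) = X ^ ((p:ℤ) * (q:ℤ)) := by rw [mul_comm]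
    rw [h1, h2]; ring
  rw [Finset.prod_congr rfl fun i _ => by rw [hfac i]]
  have hprod : ∏ i, (X ^ ((p:ℤ) * q) * Y ^ (β * q) * (1 - μ i * Y)) ^ ν i
      = X ^ ((p:ℤ) * (q:ℤ) * (∑ i, (ν i : ℤ))) * Y ^ (β * (q:ℤ) * (∑ i, (ν i : ℤ)))
        * ∏ i, (1 - μ i * Y) ^ ν i := by
    simp only [mul_pow, Finset.prod_mul_distrib, Finset.prod_pow_eq_pow_sum]
    congr 2
    · rw [← zpow_natCast (X ^ ((p:ℤ) * (q:ℤ))) (∑ i, ν i), ← zpow_mul]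
      congr 1; push_cast; ring
    · rw [← zpow_natCast (Y ^ (β * (q:ℤ))) (∑ i, ν i), ← zpow_mul]
      congr 1; push_cast; ring
  rw [hprod, ← zpow_natCast (X ^ (q:ℤ) * Y ^ δ) b, mul_zpow, mul_zpow,
    ← zpow_mul, ← zpow_mul, ← zpow_mul, ← zpow_mul,
    zpow_add₀ hX, zpow_add₀ hX, zpow_add₀ hY, zpow_add₀ hY]
  ring



/-- A subset of the two-torus cut out by a polynomial equation. -/
def IsAlgTorus (F : Set (ℂ × ℂ)) : Prop :=
  ∃ P : MvPolynomial (Fin 2) ℂ,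
    F = {pt : ℂ × ℂ | pt.1 ≠ 0 ∧ pt.2 ≠ 0 ∧ MvPolynomial.eval ![pt.1, pt.2] P = 0}

/-- A subset of `ℂ` of the form `{P = 0} ∩ {Q ≠ 0}`. -/
def IsAlg1 (B : Set ℂ) : Prop :=
  ∃ P Q : Polynomial ℂ, B = {x : ℂ | P.eval x = 0 ∧ Q.eval x ≠ 0}

/-- Quasi-homogeneous case: for `f(x,y) = x^a y^b ∏ᵢ (x^q - μᵢ y^p)^{νᵢ}` with `(p,q)`
primitive in `(ℕ*)²` and the `μᵢ ∈ ℂ*` pairwise distinct,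
`χ_c(f⁻¹(1) ∩ (ℂ*)²) = -2rS / (∑ νᵢ)`, where `S` is the area of the triangle with
vertices `(0,0)`, `(a + q∑νᵢ, b)`, `(a, b + p∑νᵢ)`.  The Euler characteristic is
abstracted as `χ₁, χ₂` satisfying covering multiplicativity, invariance under monomial
isomorphisms of the torus, product with `ℂ*`, and the value of `χ₁` on `ℂ*` minus
finitely many points. -/
theorem stmt_9 (a : ℤ) (b : ℕ) (p q : ℕ) (hp : 0 < p) (hq : 0 < q)
    (hprim : Nat.gcd p q = 1) (r : ℕ) (hr : 1 ≤ r)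
    (μ : Fin r → ℂ) (hinj : Function.Injective μ) (hμ : ∀ i, μ i ≠ 0)
    (ν : Fin r → ℕ) (hν : ∀ i, 1 ≤ ν i)
    (F : Set (ℂ × ℂ))
    (hF : F = {pt : ℂ × ℂ | pt.1 ≠ 0 ∧ pt.2 ≠ 0 ∧
      pt.1 ^ a * pt.2 ^ b * ∏ i, (pt.1 ^ q - μ i * pt.2 ^ p) ^ ν i = 1})
    (M : ℤ) (hM : M = ∑ i, (ν i : ℤ))
    (S : ℚ) (hS : S = ((|(a + (q : ℤ) * M) * ((b : ℤ) + (p : ℤ) * M) - (b : ℤ) * a| : ℤ) : ℚ) / 2)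
    (χ₁ : Set ℂ → ℤ) (χ₂ : Set (ℂ × ℂ) → ℤ)
    (hcov : ∀ (G : Set (ℂ × ℂ)) (B : Set ℂ) (e : ℕ), IsAlgTorus G → IsAlg1 B →
      (∀ pt ∈ G, pt.1 ∈ B) →
      (∀ x ∈ B, {y : ℂ | (x, y) ∈ G}.Finite ∧ {y : ℂ | (x, y) ∈ G}.ncard = e) →
      χ₂ G = (e : ℤ) * χ₁ B)
    (hiso : ∀ (u v u' v' : ℤ) (G : Set (ℂ × ℂ)), IsAlgTorus G → |u * v' - v * u'| = 1 →
      χ₂ ((fun pt : ℂ × ℂ => (pt.1 ^ u * pt.2 ^ v, pt.1 ^ u' * pt.2 ^ v')) '' G) = χ₂ G)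
    (hroots : ∀ (nn : ℕ) (c : Fin nn → ℂ), Function.Injective c → (∀ i, c i ≠ 0) →
      χ₁ {x : ℂ | x ≠ 0 ∧ ∀ i, x ≠ c i} = -(nn : ℤ))
    (hprod : ∀ B : Set ℂ, IsAlg1 B → χ₂ (B ×ˢ {y : ℂ | y ≠ 0}) = 0) :
    (χ₂ F : ℚ) = -(2 * (r : ℚ) * S) / ((M : ℚ)) := by
  classical
  have hbez0 := Nat.gcd_eq_gcd_ab p q
  set δ : ℤ := Nat.gcdA p q with hδdef
  set β : ℤ := -Nat.gcdB p q with hβdef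
  have hbez : (p:ℤ) * δ - (q:ℤ) * β = 1 := by
    rw [hprim] at hbez0; push_cast at hbez0; rw [hδdef, hβdef]; linarith
  have hNe : Nonempty (Fin r) := ⟨⟨0, hr⟩⟩
  have hMpos : 0 < M := by
    rw [hM]
    exact Finset.sum_pos (fun i _ => by exact_mod_cast hν i) Finset.univ_nonempty
  set Np : ℤ := (p:ℤ) * a + (q:ℤ) * (b:ℤ) + (p:ℤ) * (q:ℤ) * M with hNpdef
  set Kk : ℤ := β * a + δ * (b:ℤ) + β * (q:ℤ) * M with hKkdef
  -- the key change of variables identity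
  have key : ∀ X Y : ℂ, X ≠ 0 → Y ≠ 0 →
      (X ^ (p:ℤ) * Y ^ β) ^ a * (X ^ (q:ℤ) * Y ^ δ) ^ b *
        ∏ i, ((X ^ (p:ℤ) * Y ^ β) ^ q - μ i * (X ^ (q:ℤ) * Y ^ δ) ^ p) ^ ν i
      = X ^ Np * Y ^ Kk * ∏ i, (1 - μ i * Y) ^ ν i := by
    intro X Y hX hY
    rw [hNpdef, hKkdef, hM]
    exact aux_key p q β δ hbez r μ ν a b X Y hX hY
  -- splitting powers with nonnegative exponents
  have hpowsplit : ∀ (n : ℤ) (x : ℂ), x ≠ 0 → x ^ n.toNat = x ^ ((-n).toNat) * x ^ n := by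
    intro n x hx
    rw [← zpow_natCast x n.toNat, ← zpow_natCast x (-n).toNat, ← zpow_add₀ hx]
    congr 1; omega
  have hMem : ∀ (n k : ℤ) (x y P : ℂ), x ≠ 0 → y ≠ 0 →
      (x ^ n.toNat * y ^ k.toNat * P - x ^ (-n).toNat * y ^ (-k).toNat = 0 ↔
        x ^ n * y ^ k * P = 1) := by
    intro n k x y P hx hy
    have hne : x ^ (-n).toNat * y ^ (-k).toNat ≠ 0 :=
      mul_ne_zero (pow_ne_zero _ hx) (pow_ne_zero _ hy)
    rw [hpowsplit n x hx, hpowsplit k y hy, sub_eq_zero]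
    constructor
    · intro h
      apply mul_left_cancel₀ hne
      rw [mul_one]; linear_combination h
    · intro h
      calc x ^ (-n).toNat * x ^ n * (y ^ (-k).toNat * y ^ k) * P
          = x ^ (-n).toNat * y ^ (-k).toNat * (x ^ n * y ^ k * P) := by ring
        _ = _ := by rw [h, mul_one]
  have hMem1 : ∀ (k : ℤ) (y P : ℂ), y ≠ 0 →
      (y ^ k.toNat * P - y ^ (-k).toNat = 0 ↔ y ^ k * P = 1) := by
    intro k y P hy
    have hne : y ^ (-k).toNat ≠ 0 := pow_ne_zero _ hy
    rw [hpowsplit k y hy, sub_eq_zero]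
    constructor
    · intro h
      apply mul_left_cancel₀ hne
      rw [mul_one]; linear_combination h
    · intro h
      calc y ^ (-k).toNat * y ^ k * P = y ^ (-k).toNat * (y ^ k * P) := by ring
        _ = _ := by rw [h, mul_one]
  -- the transformed sets
  set G : Set (ℂ × ℂ) := {pt : ℂ × ℂ | pt.1 ≠ 0 ∧ pt.2 ≠ 0 ∧
    pt.1 ^ Np * pt.2 ^ Kk * ∏ i, (1 - μ i * pt.2) ^ ν i = 1} with hGdef
  set Gs : Set (ℂ × ℂ) := {pt : ℂ × ℂ | pt.1 ≠ 0 ∧ pt.2 ≠ 0 ∧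
    pt.2 ^ Np * pt.1 ^ Kk * ∏ i, (1 - μ i * pt.1) ^ ν i = 1} with hGsdef
  have hGalg : IsAlgTorus G := by
    refine ⟨(MvPolynomial.X 0) ^ Np.toNat * (MvPolynomial.X 1) ^ Kk.toNat *
      ∏ i, (1 - MvPolynomial.C (μ i) * MvPolynomial.X 1) ^ ν i
      - (MvPolynomial.X 0) ^ ((-Np).toNat) * (MvPolynomial.X 1) ^ ((-Kk).toNat), ?_⟩
    ext ⟨x, y⟩
    simp only [hGdef, Set.mem_setOf_eq, map_sub, map_mul, map_pow, map_prod, map_one,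
      MvPolynomial.eval_X, MvPolynomial.eval_C, Matrix.cons_val_zero, Matrix.cons_val_one,
      Matrix.head_cons]
    constructor
    · rintro ⟨hx, hy, h⟩; exact ⟨hx, hy, (hMem Np Kk x y _ hx hy).mpr h⟩
    · rintro ⟨hx, hy, h⟩; exact ⟨hx, hy, (hMem Np Kk x y _ hx hy).mp h⟩
  have hGsalg : IsAlgTorus Gs := by
    refine ⟨(MvPolynomial.X 1) ^ Np.toNat * (MvPolynomial.X 0) ^ Kk.toNat *
      ∏ i, (1 - MvPolynomial.C (μ i) * MvPolynomial.X 0) ^ ν i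
      - (MvPolynomial.X 1) ^ ((-Np).toNat) * (MvPolynomial.X 0) ^ ((-Kk).toNat), ?_⟩
    ext ⟨x, y⟩
    simp only [hGsdef, Set.mem_setOf_eq, map_sub, map_mul, map_pow, map_prod, map_one,
      MvPolynomial.eval_X, MvPolynomial.eval_C, Matrix.cons_val_zero, Matrix.cons_val_one,
      Matrix.head_cons]
    constructor
    · rintro ⟨hx, hy, h⟩; exact ⟨hx, hy, (hMem Np Kk y x _ hy hx).mpr h⟩
    · rintro ⟨hx, hy, h⟩; exact ⟨hx, hy, (hMem Np Kk y x _ hy hx).mp h⟩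
  -- the monomial map carries G onto F
  have hFG : (fun pt : ℂ × ℂ => (pt.1 ^ (p:ℤ) * pt.2 ^ β, pt.1 ^ (q:ℤ) * pt.2 ^ δ)) '' G = F := by
    ext ⟨x, y⟩
    constructor
    · rintro ⟨⟨X, Y⟩, hXY, hmap⟩
      have hX : X ≠ 0 := hXY.1
      have hY : Y ≠ 0 := hXY.2.1
      have hGeq : X ^ Np * Y ^ Kk * ∏ i, (1 - μ i * Y) ^ ν i = 1 := hXY.2.2
      have h1 : X ^ (p:ℤ) * Y ^ β = x := congrArg Prod.fst hmap
      have h2 : X ^ (q:ℤ) * Y ^ δ = y := congrArg Prod.snd hmap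
      rw [hF]
      simp only [Set.mem_setOf_eq]
      refine ⟨?_, ?_, ?_⟩
      · rw [← h1]; exact mul_ne_zero (zpow_ne_zero _ hX) (zpow_ne_zero _ hY)
      · rw [← h2]; exact mul_ne_zero (zpow_ne_zero _ hX) (zpow_ne_zero _ hY)
      · rw [← h1, ← h2, key X Y hX hY]; exact hGeq
    · intro hxy
      rw [hF] at hxy
      simp only [Set.mem_setOf_eq] at hxy
      obtain ⟨hx, hy, heq⟩ := hxy
      set X : ℂ := x ^ δ * y ^ (-β) with hXdef
      set Y : ℂ := x ^ (-(q:ℤ)) * y ^ (p:ℤ) with hYdef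
      have hX : X ≠ 0 := mul_ne_zero (zpow_ne_zero _ hx) (zpow_ne_zero _ hy)
      have hY : Y ≠ 0 := mul_ne_zero (zpow_ne_zero _ hx) (zpow_ne_zero _ hy)
      have e1 : X ^ (p:ℤ) * Y ^ β = x := by
        rw [hXdef, hYdef, aux_comb x y hx hy δ (-β) (-(q:ℤ)) (p:ℤ) (p:ℤ) β,
          show δ * (p:ℤ) + -(q:ℤ) * β = 1 by linarith,
          show (-β) * (p:ℤ) + (p:ℤ) * β = 0 by ring, zpow_one, zpow_zero, mul_one]
      have e2 : X ^ (q:ℤ) * Y ^ δ = y := by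
        rw [hXdef, hYdef, aux_comb x y hx hy δ (-β) (-(q:ℤ)) (p:ℤ) (q:ℤ) δ,
          show δ * (q:ℤ) + -(q:ℤ) * δ = 0 by ring,
          show (-β) * (q:ℤ) + (p:ℤ) * δ = 1 by linarith, zpow_one, zpow_zero, one_mul]
      have hmemG : (X, Y) ∈ G := by
        refine ⟨hX, hY, ?_⟩
        show X ^ Np * Y ^ Kk * ∏ i, (1 - μ i * Y) ^ ν i = 1
        rw [← key X Y hX hY, e1, e2]
        exact heq
      exact ⟨(X, Y), hmemG, by rw [Prod.mk.injEq]; exact ⟨e1, e2⟩⟩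
  -- the swap carries G onto Gs
  have hGGs : (fun pt : ℂ × ℂ => (pt.1 ^ (0:ℤ) * pt.2 ^ (1:ℤ), pt.1 ^ (1:ℤ) * pt.2 ^ (0:ℤ))) '' G
      = Gs := by
    ext ⟨u, v⟩
    constructor
    · rintro ⟨⟨X, Y⟩, hXY, hmap⟩
      have hX : X ≠ 0 := hXY.1
      have hY : Y ≠ 0 := hXY.2.1
      have hGeq : X ^ Np * Y ^ Kk * ∏ i, (1 - μ i * Y) ^ ν i = 1 := hXY.2.2
      simp only [zpow_zero, zpow_one, one_mul, mul_one, Prod.mk.injEq] at hmap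
      obtain ⟨h1, h2⟩ := hmap
      subst h1; subst h2
      exact ⟨hY, hX, hGeq⟩
    · intro huv
      have hu : u ≠ 0 := huv.1
      have hv : v ≠ 0 := huv.2.1
      have heq : v ^ Np * u ^ Kk * ∏ i, (1 - μ i * u) ^ ν i = 1 := huv.2.2
      exact ⟨(v, u), ⟨hv, hu, heq⟩, by simp⟩
  -- Euler characteristic transfers
  have hiso1 : χ₂ F = χ₂ G := by
    rw [← hFG]
    exact hiso (p:ℤ) β (q:ℤ) δ G hGalg
      (by rw [show (p:ℤ) * δ - β * (q:ℤ) = 1 by linarith]; exact abs_one)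
  have hiso2 : χ₂ Gs = χ₂ G := by
    rw [← hGGs]
    exact hiso 0 1 1 0 G hGalg (by norm_num)
  -- now compute χ₂ Gs
  by_cases hNp0 : Np = 0
  · -- degenerate case: the fibration is trivial
    set B₀ : Set ℂ := {x : ℂ | x ≠ 0 ∧ x ^ Kk * ∏ i, (1 - μ i * x) ^ ν i = 1} with hB₀def
    have hB₀alg : IsAlg1 B₀ := by
      refine ⟨(Polynomial.X) ^ Kk.toNat * ∏ i, (1 - Polynomial.C (μ i) * Polynomial.X) ^ ν i
        - (Polynomial.X) ^ ((-Kk).toNat), Polynomial.X, ?_⟩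
      ext x
      simp only [hB₀def, Set.mem_setOf_eq, Polynomial.eval_sub, Polynomial.eval_mul,
        Polynomial.eval_pow, Polynomial.eval_prod, Polynomial.eval_one, Polynomial.eval_C,
        Polynomial.eval_X]
      constructor
      · rintro ⟨hx, h⟩; exact ⟨(hMem1 Kk x _ hx).mpr h, hx⟩
      · rintro ⟨h, hx⟩; exact ⟨hx, (hMem1 Kk x _ hx).mp h⟩
    have hGsB : Gs = B₀ ×ˢ {y : ℂ | y ≠ 0} := by
      ext ⟨x, y⟩
      simp only [hGsdef, hB₀def, Set.mem_setOf_eq, Set.mem_prod, hNp0, zpow_zero, one_mul]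
      tauto
    have hχF : χ₂ F = 0 := by
      rw [hiso1, ← hiso2, hGsB]
      exact hprod B₀ hB₀alg
    have hdet : (a + (q:ℤ) * M) * ((b:ℤ) + (p:ℤ) * M) - (b:ℤ) * a = M * Np := by
      rw [hNpdef]; ring
    rw [hχF, hS, hdet, hNp0, mul_zero, abs_zero]
    norm_num
  · -- main case: fibration over the second coordinate with |Np| points in each fiber
    set B : Set ℂ := {x : ℂ | x ≠ 0 ∧ ∀ i, x ≠ (μ i)⁻¹} with hBdef
    have hBalg : IsAlg1 B := by
      refine ⟨0, Polynomial.X * ∏ i, (Polynomial.X - Polynomial.C ((μ i)⁻¹)), ?_⟩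
      ext x
      simp only [hBdef, Set.mem_setOf_eq, Polynomial.eval_zero, Polynomial.eval_mul,
        Polynomial.eval_prod, Polynomial.eval_sub, Polynomial.eval_X, Polynomial.eval_C,
        mul_ne_zero_iff, Finset.prod_ne_zero_iff, Finset.mem_univ, forall_true_left,
        sub_ne_zero, true_and]
    have hsub : ∀ pt ∈ Gs, pt.1 ∈ B := by
      rintro ⟨x, y⟩ hpt
      have hx : x ≠ 0 := hpt.1
      have heq : y ^ Np * x ^ Kk * ∏ i, (1 - μ i * x) ^ ν i = 1 := hpt.2.2
      refine ⟨hx, fun i hxi => ?_⟩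
      have hxi' : x = (μ i)⁻¹ := hxi
      have hzero : (1 - μ i * x) = 0 := by
        rw [hxi', mul_inv_cancel₀ (hμ i), sub_self]
      have hpz : ∏ j, (1 - μ j * x) ^ ν j = 0 :=
        Finset.prod_eq_zero (Finset.mem_univ i)
          (by rw [hzero, zero_pow (by have := hν i; omega)])
      rw [hpz, mul_zero] at heq
      exact one_ne_zero heq.symm
    have hfib : ∀ x ∈ B, {y : ℂ | (x, y) ∈ Gs}.Finite ∧
        {y : ℂ | (x, y) ∈ Gs}.ncard = Np.natAbs := by
      intro x hx
      have hx0 : x ≠ 0 := hx.1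
      have hxμ : ∀ i, x ≠ (μ i)⁻¹ := hx.2
      set c : ℂ := x ^ Kk * ∏ i, (1 - μ i * x) ^ ν i with hcdef
      have hc : c ≠ 0 := by
        rw [hcdef]
        refine mul_ne_zero (zpow_ne_zero _ hx0) (Finset.prod_ne_zero_iff.mpr fun i _ => ?_)
        refine pow_ne_zero _ fun h => ?_
        have h1 : μ i * x = 1 := by linear_combination -h
        exact hxμ i (eq_inv_of_mul_eq_one_right h1)
      have hset : {y : ℂ | (x, y) ∈ Gs} = {y : ℂ | y ≠ 0 ∧ y ^ Np = c⁻¹} := by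
        ext y
        simp only [hGsdef, Set.mem_setOf_eq]
        constructor
        · rintro ⟨_, hy, heq⟩
          refine ⟨hy, ?_⟩
          have h2 := congrArg (· * c⁻¹) (show y ^ Np * c = 1 by
            rw [hcdef]; linear_combination heq)
          simpa [mul_assoc, mul_inv_cancel₀ hc] using h2
        · rintro ⟨hy, heq⟩
          refine ⟨hx0, hy, ?_⟩
          have h3 : y ^ Np * c = 1 := by rw [heq, inv_mul_cancel₀ hc]
          rw [hcdef] at h3; linear_combination h3
      rw [hset]
      exact aux_card_zpow Np hNp0 c⁻¹ (inv_ne_zero hc)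
    have hχB : χ₁ B = -(r : ℤ) :=
      hroots r (fun i => (μ i)⁻¹) (fun i j h => hinj (inv_injective h))
        (fun i => inv_ne_zero (hμ i))
    have hχF : χ₂ F = -((Np.natAbs : ℤ) * (r : ℤ)) := by
      rw [hiso1, ← hiso2, hcov Gs B Np.natAbs hGsalg hBalg hsub hfib, hχB]; ring
    have hdet : (a + (q:ℤ) * M) * ((b:ℤ) + (p:ℤ) * M) - (b:ℤ) * a = M * Np := by
      rw [hNpdef]; ring
    have habs : |M * Np| = M * (Np.natAbs : ℤ) := by
      rw [abs_mul, abs_of_nonneg hMpos.le, Int.abs_eq_natAbs]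
    have hMQ : (M : ℚ) ≠ 0 := by exact_mod_cast hMpos.ne'
    rw [hχF, hS, hdet, habs]
    push_cast
    field_simp
end
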